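/- Let ρ₁ and ρ₂ be Borel probability measures on S. Assume: (i) for i = 1, 2, lim_{L→∞} (1/|Λ_L|²) Σ_{x,y∈Λ_L} | ρ_i(σ_x σ_y) − ρ_i(σ_x) ρ_i(σ_y) | = 0, where ρ(h) denotes ∫ h dρ; and (ii) for ρ₁×ρ₂-almost every (σ, σ′) the spin overlap R(σ,σ′) = lim_{L→∞} (1/|Λ_L|) Σ_{x∈Λ_L} σ_x σ′_x exists. Then there is a constant q such that R(σ,σ′) = q for ρ₁×ρ₂-almost every (σ, σ′). -/

import Mathlib

/-!
Under `ρ₁ × ρ₂` the box overlap `R_L` is `|Λ_L|⁻¹ Σ_x σ_x σ'_x`, so its variance is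
`|Λ_L|⁻² Σ_{x,y} cov(σ_x σ'_x, σ_y σ'_y)`. Each covariance factorises over the product measure,
and since all spins are bounded by `1` it is at most the sum of the truncated correlations of
`ρ₁` and `ρ₂` at `(x, y)`; hypothesis (i) therefore forces `Var R_L → 0`. As `|R_L| ≤ 1` and
`R_L → R` almost everywhere, dominated convergence gives `Var R = lim Var R_L = 0`, so `R` is
almost surely equal to its mean.
-/

open MeasureTheory Filter

noncomputable section

/-- Sites of `ℤ^d`. -/
abbrev Site (d : ℕ) := Fin d → ℤ
/-- Spin configurations on `ℤ^d`. -/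
abbrev Config (d : ℕ) := Site d → Bool

/-- The spin value `±1` of a Boolean. -/
def spin (b : Bool) : ℝ := if b then 1 else -1

/-- The box `Λ_L = {−L,…,L}^d`. -/
def box (d L : ℕ) : Finset (Site d) := Fintype.piFinset fun _ => Finset.Icc (-(L : ℤ)) (L : ℤ)

/-- The spin overlap in the box `Λ_L`: `(1/|Λ_L|) Σ_{x∈Λ_L} σ_x σ′_x`. -/
def spinOverlapL (d L : ℕ) (σ σ' : Config d) : ℝ :=
  ((box d L).card : ℝ)⁻¹ * ∑ x ∈ box d L, spin (σ x) * spin (σ' x)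

open ProbabilityTheory Topology

lemma Measurable.memLp_of_abs_le {Ω : Type*} [MeasurableSpace Ω] {μ : Measure Ω}
    [IsFiniteMeasure μ] {h : Ω → ℝ} (hm : Measurable h) {C : ℝ} (hC : ∀ ω, |h ω| ≤ C)
    {p : ENNReal} : MemLp h p μ :=
  .of_bound hm.aestronglyMeasurable C (ae_of_all _ hC)

section VarianceLimit

variable {Ω : Type*} [MeasurableSpace Ω] {μ : Measure Ω} [IsProbabilityMeasure μ]
  {F : ℕ → Ω → ℝ} {R : Ω → ℝ} {C : ℝ}

lemma memLp_two_of_tendsto_ae (hF : ∀ n, AEStronglyMeasurable (F n) μ)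
    (hFC : ∀ n ω, |F n ω| ≤ C) (hR : ∀ᵐ ω ∂μ, Tendsto (F · ω) atTop (𝓝 (R ω))) :
    MemLp R 2 μ :=
  .of_bound (aestronglyMeasurable_of_tendsto_ae atTop hF hR) C
    (hR.mono fun ω h => le_of_tendsto' h.abs fun n => hFC n ω)

/-- Dominated convergence for the first two moments. -/
lemma tendsto_variance_of_tendsto_ae (hF : ∀ n, AEStronglyMeasurable (F n) μ)
    (hFC : ∀ n ω, |F n ω| ≤ C) (hR : ∀ᵐ ω ∂μ, Tendsto (F · ω) atTop (𝓝 (R ω))) :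
    Tendsto (fun n => Var[F n; μ]) atTop (𝓝 Var[R; μ]) := by
  have hFmem (n : ℕ) : MemLp (F n) 2 μ := .of_bound (hF n) C (ae_of_all _ (hFC n))
  simp_rw [variance_eq_sub (hFmem _), variance_eq_sub (memLp_two_of_tendsto_ae hF hFC hR),
    Pi.pow_apply]
  refine .sub ?_ (.pow ?_ 2)
  · refine tendsto_integral_of_dominated_convergence (fun _ => C ^ 2)
      (fun n => (hF n).pow 2) (integrable_const _) (fun n => ae_of_all _ fun ω => ?_)
      (hR.mono fun ω h => h.pow 2)
    rw [Real.norm_eq_abs, abs_pow]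
    exact pow_le_pow_left₀ (abs_nonneg _) (hFC n ω) 2
  · exact tendsto_integral_of_dominated_convergence (fun _ => C) hF (integrable_const _)
      (fun n => ae_of_all _ (hFC n)) hR

lemma exists_ae_tendsto_const_of_tendsto_variance_zero
    (hF : ∀ n, AEStronglyMeasurable (F n) μ) (hFC : ∀ n ω, |F n ω| ≤ C)
    (hlim : ∀ᵐ ω ∂μ, ∃ r, Tendsto (F · ω) atTop (𝓝 r))
    (hvar : Tendsto (fun n => Var[F n; μ]) atTop (𝓝 0)) :
    ∃ q, ∀ᵐ ω ∂μ, Tendsto (F · ω) atTop (𝓝 q) := by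
  set R : Ω → ℝ := fun ω => limUnder atTop (F · ω)
  have hR : ∀ᵐ ω ∂μ, Tendsto (F · ω) atTop (𝓝 (R ω)) := hlim.mono fun _ => tendsto_nhds_limUnder
  have hvarR : Var[R; μ] = 0 := tendsto_nhds_unique (tendsto_variance_of_tendsto_ae hF hFC hR) hvar
  refine ⟨μ[R], ?_⟩
  filter_upwards [hR, ae_eq_integral_of_variance_eq_zero (memLp_two_of_tendsto_ae hF hFC hR) hvarR]
    with ω hω hRω
  rwa [← hRω]

end VarianceLimit

section ProductCovariance

variable {ι Ω₁ Ω₂ : Type*} [MeasurableSpace Ω₁] [MeasurableSpace Ω₂]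
  {ρ₁ : Measure Ω₁} {ρ₂ : Measure Ω₂} [IsProbabilityMeasure ρ₁] [IsProbabilityMeasure ρ₂]
  {f : ι → Ω₁ → ℝ} {g : ι → Ω₂ → ℝ}

lemma abs_integral_le_one {Ω : Type*} [MeasurableSpace Ω] {μ : Measure Ω}
    [IsProbabilityMeasure μ] {h : Ω → ℝ} (h1 : ∀ ω, |h ω| ≤ 1) : |∫ ω, h ω ∂μ| ≤ 1 := by
  simpa using norm_integral_le_of_norm_le_const (μ := μ) (f := h) (ae_of_all _ h1)

lemma abs_mul_sub_mul_le {a b c d : ℝ} (ha : |a| ≤ 1) (hd : |d| ≤ 1) :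
    |a * b - c * d| ≤ |a - c| + |b - d| :=
  calc |a * b - c * d| = |a * (b - d) + (a - c) * d| := by ring_nf
    _ ≤ |a| * |b - d| + |a - c| * |d| := by rw [← abs_mul, ← abs_mul]; exact abs_add_le _ _
    _ ≤ |b - d| + |a - c| := add_le_add (mul_le_of_le_one_left (abs_nonneg _) ha)
        (mul_le_of_le_one_right (abs_nonneg _) hd)
    _ = |a - c| + |b - d| := add_comm _ _

variable (hf : ∀ i, Measurable (f i)) (hf1 : ∀ i ω, |f i ω| ≤ 1)
  (hg : ∀ i, Measurable (g i)) (hg1 : ∀ i ω, |g i ω| ≤ 1)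
include hf hf1 hg hg1

lemma memLp_prod_mul (i : ι) :
    MemLp (fun p : Ω₁ × Ω₂ => f i p.1 * g i p.2) 2 (ρ₁.prod ρ₂) :=
  (((hf i).comp measurable_fst).mul ((hg i).comp measurable_snd)).memLp_of_abs_le fun p => by
    simpa [abs_mul] using mul_le_one₀ (hf1 i p.1) (abs_nonneg _) (hg1 i p.2)

lemma covariance_prod_mul (i j : ι) :
    cov[fun p => f i p.1 * g i p.2, fun p => f j p.1 * g j p.2; ρ₁.prod ρ₂] =
      ρ₁[f i * f j] * ρ₂[g i * g j] - ρ₁[f i] * ρ₁[f j] * (ρ₂[g i] * ρ₂[g j]) := by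
  rw [covariance_eq_sub (memLp_prod_mul hf hf1 hg hg1 i) (memLp_prod_mul hf hf1 hg hg1 j)]
  simp only [Pi.mul_apply, integral_prod_mul (f := f i) (g := g i),
    integral_prod_mul (f := f j) (g := g j)]
  rw [← integral_prod_mul (fun x => f i x * f j x) (fun y => g i y * g j y)]
  congr 1
  · congr 1
    funext p
    ring
  · ring

lemma abs_covariance_prod_mul_le (i j : ι) :
    |cov[fun p => f i p.1 * g i p.2, fun p => f j p.1 * g j p.2; ρ₁.prod ρ₂]| ≤
      |cov[f i, f j; ρ₁]| + |cov[g i, g j; ρ₂]| := by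
  have hfmem (k : ι) : MemLp (f k) 2 ρ₁ := (hf k).memLp_of_abs_le (hf1 k)
  have hgmem (k : ι) : MemLp (g k) 2 ρ₂ := (hg k).memLp_of_abs_le (hg1 k)
  rw [covariance_prod_mul hf hf1 hg hg1, covariance_eq_sub (hfmem i) (hfmem j),
    covariance_eq_sub (hgmem i) (hgmem j)]
  refine abs_mul_sub_mul_le (abs_integral_le_one fun ω => ?_) ?_
  · simpa [abs_mul] using mul_le_one₀ (hf1 i ω) (abs_nonneg _) (hf1 j ω)
  · rw [abs_mul]
    exact mul_le_one₀ (abs_integral_le_one (hg1 i)) (abs_nonneg _) (abs_integral_le_one (hg1 j))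

lemma variance_sum_prod_mul_le (s : Finset ι) :
    Var[fun p => ∑ i ∈ s, f i p.1 * g i p.2; ρ₁.prod ρ₂] ≤
      ∑ i ∈ s, ∑ j ∈ s, |cov[f i, f j; ρ₁]| + ∑ i ∈ s, ∑ j ∈ s, |cov[g i, g j; ρ₂]| := by
  rw [variance_fun_sum' fun i _ => memLp_prod_mul hf hf1 hg hg1 i, ← Finset.sum_add_distrib]
  refine Finset.sum_le_sum fun i _ => ?_
  rw [← Finset.sum_add_distrib]
  exact Finset.sum_le_sum fun j _ =>
    (le_abs_self _).trans (abs_covariance_prod_mul_le hf hf1 hg hg1 i j)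

end ProductCovariance

section Spins

variable {d : ℕ}

lemma abs_spin (b : Bool) : |spin b| = 1 := by cases b <;> simp [spin]

lemma measurable_spin_apply (x : Site d) : Measurable fun σ : Config d => spin (σ x) :=
  (Measurable.of_discrete (f := spin)).comp (measurable_pi_apply x)

lemma covariance_spin (ρ : Measure (Config d)) [IsProbabilityMeasure ρ] (x y : Site d) :
    cov[fun σ => spin (σ x), fun σ => spin (σ y); ρ] =
      (∫ σ, spin (σ x) * spin (σ y) ∂ρ) - (∫ σ, spin (σ x) ∂ρ) * ∫ σ, spin (σ y) ∂ρ :=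
  covariance_eq_sub
    ((measurable_spin_apply x).memLp_of_abs_le fun _ => (abs_spin _).le)
    ((measurable_spin_apply y).memLp_of_abs_le fun _ => (abs_spin _).le)

/-- The averaged truncated two-point correlation of hypothesis (i). -/
def meanTruncatedCorrelation (d : ℕ) (ρ : Measure (Config d)) (L : ℕ) : ℝ :=
  (((box d L).card : ℝ) ^ 2)⁻¹ * ∑ x ∈ box d L, ∑ y ∈ box d L,
    |(∫ σ, spin (σ x) * spin (σ y) ∂ρ) - (∫ σ, spin (σ x) ∂ρ) * ∫ σ, spin (σ y) ∂ρ|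

lemma abs_spinOverlapL_le_one (L : ℕ) (σ σ' : Config d) : |spinOverlapL d L σ σ'| ≤ 1 := by
  have hcard : (0 : ℝ) < (box d L).card :=
    Nat.cast_pos.2 (Finset.card_pos.2 ⟨0, by simp [box, Fintype.mem_piFinset]⟩)
  rw [spinOverlapL, abs_mul, abs_inv, Nat.abs_cast, inv_mul_le_iff₀ hcard, mul_one]
  calc |∑ x ∈ box d L, spin (σ x) * spin (σ' x)|
      ≤ ∑ x ∈ box d L, |spin (σ x) * spin (σ' x)| := Finset.abs_sum_le_sum_abs _ _
    _ = (box d L).card := by simp [abs_mul, abs_spin]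

lemma measurable_spinOverlapL (L : ℕ) :
    Measurable fun p : Config d × Config d => spinOverlapL d L p.1 p.2 :=
  (Finset.measurable_sum _ fun x _ => ((measurable_spin_apply x).comp measurable_fst).mul
    ((measurable_spin_apply x).comp measurable_snd)).const_mul _

lemma variance_spinOverlapL_le (ρ₁ ρ₂ : Measure (Config d)) [IsProbabilityMeasure ρ₁]
    [IsProbabilityMeasure ρ₂] (L : ℕ) :
    Var[fun p => spinOverlapL d L p.1 p.2; ρ₁.prod ρ₂] ≤
      meanTruncatedCorrelation d ρ₁ L + meanTruncatedCorrelation d ρ₂ L := by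
  have hspin1 (x : Site d) (σ : Config d) : |spin (σ x)| ≤ 1 := (abs_spin _).le
  have h := variance_sum_prod_mul_le (ρ₁ := ρ₁) (ρ₂ := ρ₂) measurable_spin_apply hspin1
    measurable_spin_apply hspin1 (box d L)
  simp only [covariance_spin] at h
  simp only [spinOverlapL, meanTruncatedCorrelation]
  rw [variance_const_mul, inv_pow, ← mul_add]
  exact mul_le_mul_of_nonneg_left h (by positivity)

end Spins

/-- overlaps of mixing states are a.s. constant.
Let `ρ₁, ρ₂` be Borel probability measures on `S` whose truncated two-point correlations
average to zero in the sense (i), and suppose the spin overlap `R(σ,σ′)` exists for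
`ρ₁×ρ₂`-a.e. `(σ,σ′)`.  Then there is a constant `q` with `R(σ,σ′) = q` for `ρ₁×ρ₂`-a.e.
`(σ,σ′)`. -/
theorem overlap_constant_between_states (d : ℕ) (ρ₁ ρ₂ : Measure (Config d))
    [IsProbabilityMeasure ρ₁] [IsProbabilityMeasure ρ₂]
    (h1 : ∀ ρ ∈ ({ρ₁, ρ₂} : Set (Measure (Config d))),
      Tendsto (fun L => (((box d L).card : ℝ) ^ 2)⁻¹ *
          ∑ x ∈ box d L, ∑ y ∈ box d L,
            |(∫ σ, spin (σ x) * spin (σ y) ∂ρ)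
              - (∫ σ, spin (σ x) ∂ρ) * ∫ σ, spin (σ y) ∂ρ|)
        atTop (nhds 0))
    (h2 : ∀ᵐ p ∂(ρ₁.prod ρ₂), ∃ r : ℝ,
      Tendsto (fun L => spinOverlapL d L p.1 p.2) atTop (nhds r)) :
    ∃ q : ℝ, ∀ᵐ p ∂(ρ₁.prod ρ₂),
      Tendsto (fun L => spinOverlapL d L p.1 p.2) atTop (nhds q) := by
  refine exists_ae_tendsto_const_of_tendsto_variance_zero
    (fun L => (measurable_spinOverlapL L).aestronglyMeasurable)
    (fun L p => abs_spinOverlapL_le_one L p.1 p.2) h2 ?_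
  have hcorr := (h1 ρ₁ (by simp)).add (h1 ρ₂ (by simp))
  rw [add_zero] at hcorr
  exact squeeze_zero (fun L => variance_nonneg _ _) (variance_spinOverlapL_le ρ₁ ρ₂) hcorr
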